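/- arXiv:2602.22199 — 2 statements merged into one kernel-verified Lean document; each statement's English description precedes it below -/
import Mathlib

section
/- Every 1-cycle γ in Z^d with coefficients in Z_q whose support consists of T edges bounds a 2-chain supported on at most ((d−1)/(8d))·T² plaquettes. That is, Area(γ) ≤ ((d−1)/(8d))·|γ|². -/
namespace Stmt10

/-- Vertices of the cubical lattice `ℤ^d`. -/
abbrev Vertex (d : ℕ) := Fin d → ℤ

/-- An (oriented) edge of `ℤ^d`: a base vertex together with a direction. -/
abbrev Edge (d : ℕ) := Vertex d × Fin d

/-- An (oriented) plaquette of `ℤ^d`: a base vertex together with two directions. -/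
abbrev Plaquette (d : ℕ) := Vertex d × Fin d × Fin d

/-- Boundary of a single edge, as a `0`-chain with `ZMod q` coefficients. -/
noncomputable def bdryEdge (d q : ℕ) (e : Edge d) : Vertex d →₀ ZMod q :=
  Finsupp.single (e.1 + Pi.single e.2 1) 1 - Finsupp.single e.1 1

/-- Boundary map on 1-chains with `ZMod q` coefficients. -/
noncomputable def bdry1 (d q : ℕ) (γ : Edge d →₀ ZMod q) : Vertex d →₀ ZMod q :=
  γ.sum fun e c => c • bdryEdge d q e

/-- Boundary of a single plaquette, as a `1`-chain with `ZMod q` coefficients. -/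
noncomputable def bdryPlaq (d q : ℕ) (p : Plaquette d) : Edge d →₀ ZMod q :=
  Finsupp.single (p.1, p.2.1) 1
    + Finsupp.single (p.1 + Pi.single p.2.1 1, p.2.2) 1
    - Finsupp.single (p.1 + Pi.single p.2.2 1, p.2.1) 1
    - Finsupp.single (p.1, p.2.2) 1

/-- Boundary map on 2-chains with `ZMod q` coefficients. -/
noncomputable def bdry2 (d q : ℕ) (τ : Plaquette d →₀ ZMod q) : Edge d →₀ ZMod q :=
  τ.sum fun p c => c • bdryPlaq d q p

/-! ### Generic linear maps from finitely supported chains -/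

noncomputable def lm {q : ℕ} {α β : Type*} (g : α → (β →₀ ZMod q)) :
    (α →₀ ZMod q) →ₗ[ZMod q] (β →₀ ZMod q) :=
  Finsupp.lsum (ZMod q) fun a => LinearMap.id.smulRight (g a)

lemma lm_apply {q : ℕ} {α β : Type*} (g : α → (β →₀ ZMod q)) (γ : α →₀ ZMod q) :
    lm g γ = γ.sum fun a c => c • g a := rfl

lemma lm_single {q : ℕ} {α β : Type*} (g : α → (β →₀ ZMod q)) (a : α) (c : ZMod q) :
    lm g (Finsupp.single a c) = c • g a := by simp [lm]

lemma lm_single_one {q : ℕ} {α β : Type*} (g : α → (β →₀ ZMod q)) (a : α) :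
    lm g (Finsupp.single a 1) = g a := by simp [lm]

lemma bdry1_eq (d q : ℕ) (γ : Edge d →₀ ZMod q) : bdry1 d q γ = lm (bdryEdge d q) γ := rfl
lemma bdry2_eq (d q : ℕ) (τ : Plaquette d →₀ ZMod q) : bdry2 d q τ = lm (bdryPlaq d q) τ := rfl

lemma card_support_lm_le {q : ℕ} {α β : Type*} (g : α → (β →₀ ZMod q)) (γ : α →₀ ZMod q) :
    (lm g γ).support.card ≤ ∑ a ∈ γ.support, (g a).support.card := by
  classical
  calc (lm g γ).support.card
      ≤ (γ.support.biUnion fun a => ((γ a) • g a).support).card :=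
        Finset.card_le_card (by rw [lm_apply]; exact Finsupp.support_sum)
    _ ≤ ∑ a ∈ γ.support, ((γ a) • g a).support.card := Finset.card_biUnion_le
    _ ≤ ∑ a ∈ γ.support, (g a).support.card := by
        exact Finset.sum_le_sum fun a _ => Finset.card_le_card Finsupp.support_smul

/-! ### Vertical chains and plaquette columns -/

section Geometry

variable {d q : ℕ}

noncomputable def setI (i : Fin d) (x : Vertex d) (t : ℤ) : Vertex d := Function.update x i t

lemma setI_apply (i : Fin d) (x : Vertex d) (t : ℤ) : setI i x t i = t := by
  simp [setI]

lemma setI_setI (i : Fin d) (x : Vertex d) (s t : ℤ) :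
    setI i (setI i x s) t = setI i x t := by
  simp [setI, Function.update_idem]

lemma setI_self (i : Fin d) (x : Vertex d) : setI i x (x i) = x := by
  simp [setI]

lemma add_single_i (i : Fin d) (x : Vertex d) : x + Pi.single i 1 = setI i x (x i + 1) := by
  funext k
  by_cases hk : k = i
  · subst hk; simp [setI]
  · simp [setI, Function.update_of_ne hk, Pi.single_apply, hk]

lemma setI_add_single_i (i : Fin d) (x : Vertex d) (t : ℤ) :
    setI i x t + Pi.single i 1 = setI i x (t + 1) := by
  rw [add_single_i i (setI i x t), setI_apply, setI_setI]

lemma setI_add_single_ne {i j : Fin d} (hj : j ≠ i) (x : Vertex d) (t : ℤ) :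
    setI i (x + Pi.single j 1) t = setI i x t + Pi.single j 1 := by
  funext k
  by_cases hk : k = i
  · subst hk; simp [setI, Pi.single_apply, Ne.symm hj]
  · simp [setI, Function.update_of_ne hk]

lemma apply_add_single_ne {i j : Fin d} (hj : j ≠ i) (x : Vertex d) :
    (x + Pi.single j 1 : Vertex d) i = x i := by
  have : (Pi.single j 1 : Vertex d) i = 0 := by
    simp [Pi.single_apply, Ne.symm hj]
  simp [Pi.add_apply, this]

/-- Vertical 1-chain in direction `i` from level `a` to level `b` over base `x`. -/
noncomputable def vchain (i : Fin d) (x : Vertex d) (a b : ℤ) : Edge d →₀ ZMod q :=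
  (∑ h ∈ Finset.Ico a b, Finsupp.single (setI i x h, i) 1)
    - (∑ h ∈ Finset.Ico b a, Finsupp.single (setI i x h, i) 1)

lemma vchain_neg (i : Fin d) (x : Vertex d) (a b : ℤ) :
    vchain (q := q) i x a b = - vchain i x b a := by
  simp [vchain]

lemma vchain_self (i : Fin d) (x : Vertex d) (a : ℤ) :
    vchain (q := q) i x a a = 0 := by simp [vchain]

lemma vchain_succ (i : Fin d) (x : Vertex d) (a b : ℤ) :
    vchain (q := q) i x a (b + 1) = vchain i x a b + Finsupp.single (setI i x b, i) 1 := by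
  rcases le_or_gt a (b) with h | h
  · have h1 : Finset.Ico a (b+1) = insert b (Finset.Ico a b) := by ext t; simp; omega
    have h2 : Finset.Ico b a = (∅ : Finset ℤ) := Finset.Ico_eq_empty (by omega)
    have h3 : Finset.Ico (b+1) a = (∅ : Finset ℤ) := Finset.Ico_eq_empty (by omega)
    rw [vchain, vchain, h1, h2, h3, Finset.sum_insert (by simp)]
    abel
  · have h1 : Finset.Ico a (b+1) = (∅ : Finset ℤ) := Finset.Ico_eq_empty (by omega)
    have h2 : Finset.Ico a b = (∅ : Finset ℤ) := Finset.Ico_eq_empty (by omega)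
    have h3 : Finset.Ico b a = insert b (Finset.Ico (b+1) a) := by ext t; simp; omega
    rw [vchain, vchain, h1, h2, h3, Finset.sum_insert (by simp)]
    abel

lemma vchain_base_congr (i : Fin d) (x : Vertex d) (s a b : ℤ) :
    vchain (q := q) i (setI i x s) a b = vchain i x a b := by
  simp [vchain, setI_setI]

lemma bdry1_vchain_le (i : Fin d) (x : Vertex d) {a b : ℤ} (hab : a ≤ b) :
    lm (bdryEdge d q) (vchain i x a b)
      = Finsupp.single (setI i x b) 1 - Finsupp.single (setI i x a) 1 := by
  refine Int.le_induction (motive := fun b _ => lm (bdryEdge d q) (vchain i x a b)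
      = Finsupp.single (setI i x b) 1 - Finsupp.single (setI i x a) 1) ?_ ?_ b hab
  · simp [vchain_self]
  · intro n hn ih
    rw [vchain_succ, map_add, ih, lm_single_one, bdryEdge]
    simp only
    rw [setI_add_single_i]
    abel

lemma bdry1_vchain (i : Fin d) (x : Vertex d) (a b : ℤ) :
    lm (bdryEdge d q) (vchain i x a b)
      = Finsupp.single (setI i x b) 1 - Finsupp.single (setI i x a) 1 := by
  rcases le_total a b with h | h
  · exact bdry1_vchain_le i x h
  · rw [vchain_neg, map_neg, bdry1_vchain_le i x h]
    abel

/-- Column of plaquettes spanning directions `i`,`j` from level `a` to `b`. -/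
noncomputable def pcol (i j : Fin d) (x : Vertex d) (a b : ℤ) : Plaquette d →₀ ZMod q :=
  (∑ h ∈ Finset.Ico a b, Finsupp.single (setI i x h, i, j) 1)
    - (∑ h ∈ Finset.Ico b a, Finsupp.single (setI i x h, i, j) 1)

lemma pcol_neg (i j : Fin d) (x : Vertex d) (a b : ℤ) :
    pcol (q := q) i j x a b = - pcol i j x b a := by simp [pcol]

lemma pcol_self (i j : Fin d) (x : Vertex d) (a : ℤ) :
    pcol (q := q) i j x a a = 0 := by simp [pcol]

lemma pcol_succ (i j : Fin d) (x : Vertex d) (a b : ℤ) :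
    pcol (q := q) i j x a (b + 1) = pcol i j x a b + Finsupp.single (setI i x b, i, j) 1 := by
  rcases le_or_gt a (b) with h | h
  · have h1 : Finset.Ico a (b+1) = insert b (Finset.Ico a b) := by ext t; simp; omega
    have h2 : Finset.Ico b a = (∅ : Finset ℤ) := Finset.Ico_eq_empty (by omega)
    have h3 : Finset.Ico (b+1) a = (∅ : Finset ℤ) := Finset.Ico_eq_empty (by omega)
    rw [pcol, pcol, h1, h2, h3, Finset.sum_insert (by simp)]
    abel
  · have h1 : Finset.Ico a (b+1) = (∅ : Finset ℤ) := Finset.Ico_eq_empty (by omega)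
    have h2 : Finset.Ico a b = (∅ : Finset ℤ) := Finset.Ico_eq_empty (by omega)
    have h3 : Finset.Ico b a = insert b (Finset.Ico (b+1) a) := by ext t; simp; omega
    rw [pcol, pcol, h1, h2, h3, Finset.sum_insert (by simp)]
    abel

lemma bdry2_pcol_le {i j : Fin d} (hj : j ≠ i) (x : Vertex d) {a b : ℤ} (hab : a ≤ b) :
    lm (bdryPlaq d q) (pcol i j x a b)
      = vchain i x a b - vchain i (x + Pi.single j 1) a b
        + Finsupp.single (setI i x b, j) 1 - Finsupp.single (setI i x a, j) 1 := by
  have key : ∀ (n : ℕ), ∀ b, b = a + n → lm (bdryPlaq d q) (pcol i j x a b)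
      = vchain i x a b - vchain i (x + Pi.single j 1) a b
        + Finsupp.single (setI i x b, j) 1 - Finsupp.single (setI i x a, j) 1 := by
    intro n
    induction n with
    | zero => intro b hb; simp at hb; subst hb; simp [pcol_self, vchain_self]
    | succ n ih =>
        intro b hb
        have hb' : b = (a + n) + 1 := by push_cast at hb ⊢; omega
        subst hb'
        rw [pcol_succ, map_add, ih (a + n) rfl, lm_single_one, bdryPlaq]
        simp only
        rw [vchain_succ i x a (a + n), vchain_succ i (x + Pi.single j 1) a (a + n),
          setI_add_single_i, ← setI_add_single_ne hj x (a + n)]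
        abel
  exact key (b - a).toNat b (by omega)

lemma bdry2_pcol {i j : Fin d} (hj : j ≠ i) (x : Vertex d) (a b : ℤ) :
    lm (bdryPlaq d q) (pcol i j x a b)
      = vchain i x a b - vchain i (x + Pi.single j 1) a b
        + Finsupp.single (setI i x b, j) 1 - Finsupp.single (setI i x a, j) 1 := by
  rcases le_total a b with h | h
  · exact bdry2_pcol_le hj x h
  · rw [pcol_neg, map_neg, bdry2_pcol_le hj x h,
      vchain_neg i x a b, vchain_neg i (x + Pi.single j 1) a b]
    abel

lemma card_support_pcol (i j : Fin d) (x : Vertex d) (a b : ℤ) :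
    (pcol (q := q) i j x a b).support.card ≤ (b - a).natAbs := by
  have gen : ∀ (u v : ℤ), u ≤ v →
      ((∑ h ∈ Finset.Ico u v, (Finsupp.single (setI i x h, i, j) 1 : Plaquette d →₀ ZMod q))).support.card
        ≤ (v - u).natAbs := by
    intro u v huv
    calc _ ≤ ((Finset.Ico u v).biUnion fun h =>
          (Finsupp.single (setI i x h, i, j) (1 : ZMod q)).support).card :=
            Finset.card_le_card Finsupp.support_finset_sum
      _ ≤ ∑ h ∈ Finset.Ico u v, (Finsupp.single (setI i x h, i, j) (1 : ZMod q)).support.card :=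
            Finset.card_biUnion_le
      _ ≤ ∑ h ∈ Finset.Ico u v, 1 := Finset.sum_le_sum fun h _ =>
            (Finset.card_le_card Finsupp.support_single_subset).trans
              (le_of_eq (Finset.card_singleton _))
      _ = (Finset.Ico u v).card := by simp
      _ ≤ (v - u).natAbs := by rw [Int.card_Ico]; omega
  rcases le_total a b with h | h
  · have h2 : Finset.Ico b a = (∅ : Finset ℤ) := by simp [Finset.Ico_eq_empty_iff]; omega
    rw [pcol, h2]
    simpa using gen a b h
  · have h2 : Finset.Ico a b = (∅ : Finset ℤ) := by simp [Finset.Ico_eq_empty_iff]; omega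
    rw [pcol, h2]
    have := gen b a h
    calc ((0 - ∑ h ∈ Finset.Ico b a, (Finsupp.single (setI i x h, i, j) 1 : Plaquette d →₀ ZMod q)).support.card)
        = ((∑ h ∈ Finset.Ico b a, (Finsupp.single (setI i x h, i, j) 1 : Plaquette d →₀ ZMod q)).support.card) := by
          rw [zero_sub, Finsupp.support_neg]
      _ ≤ (a - b).natAbs := this
      _ ≤ (b - a).natAbs := by omega

/-! ### Homotopy (prism) operators -/

lemma apply_add_single_self (i : Fin d) (x : Vertex d) :
    (x + Pi.single i 1 : Vertex d) i = x i + 1 := by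
  simp [Pi.add_apply]

noncomputable def Hedge (i : Fin d) (m : ℤ) (e : Edge d) : Plaquette d →₀ ZMod q :=
  if e.2 = i then 0 else pcol i e.2 e.1 m (e.1 i)

noncomputable def fEdge (i : Fin d) (m : ℤ) (e : Edge d) : Edge d →₀ ZMod q :=
  if e.2 = i then 0 else Finsupp.single (setI i e.1 m, e.2) 1

noncomputable def Hvert (i : Fin d) (m : ℤ) (v : Vertex d) : Edge d →₀ ZMod q :=
  vchain i v m (v i)

lemma homotopy_single (i : Fin d) (m : ℤ) (e : Edge d) :
    lm (bdryPlaq d q) (Hedge (q := q) i m e) + lm (Hvert i m) (bdryEdge d q e)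
      + fEdge i m e = Finsupp.single e 1 := by
  obtain ⟨x, j⟩ := e
  rw [bdryEdge, map_sub, lm_single_one, lm_single_one]
  by_cases hj : j = i
  · subst hj
    simp only [Hedge, fEdge, if_pos rfl, if_true, Hvert]
    rw [map_zero]
    have h1 : (x + Pi.single j 1 : Vertex d) = setI j x (x j + 1) := add_single_i j x
    rw [h1, setI_apply, vchain_base_congr, vchain_succ, setI_self]
    abel
  · simp only [Hedge, fEdge, if_neg hj, Hvert]
    rw [bdry2_pcol hj x m (x i)]
    have h1 : (x + Pi.single j 1 : Vertex d) i = x i := apply_add_single_ne hj x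
    rw [h1, setI_self]
    abel

lemma homotopy (i : Fin d) (m : ℤ) (γ : Edge d →₀ ZMod q) :
    lm (bdryPlaq d q) (lm (Hedge (q := q) i m) γ)
      + lm (Hvert i m) (lm (bdryEdge d q) γ) + lm (fEdge i m) γ = γ := by
  have key : (lm (bdryPlaq d q)).comp (lm (Hedge (q := q) i m))
      + (lm (Hvert i m)).comp (lm (bdryEdge d q)) + lm (fEdge i m) = LinearMap.id := by
    apply Finsupp.lhom_ext
    intro e c
    have hc : (Finsupp.single e c : Edge d →₀ ZMod q) = c • Finsupp.single e 1 := by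
      rw [Finsupp.smul_single, smul_eq_mul, mul_one]
    rw [hc]
    simp only [LinearMap.add_apply, LinearMap.comp_apply, map_smul, LinearMap.id_apply,
      lm_single_one]
    rw [homotopy_single]
  have h2 := DFunLike.congr_fun key γ
  simpa only [LinearMap.add_apply, LinearMap.comp_apply, LinearMap.id_apply] using h2

lemma bdry1_bdry2_eq_zero (τ : Plaquette d →₀ ZMod q) :
    lm (bdryEdge d q) (lm (bdryPlaq d q) τ) = 0 := by
  have key : (lm (bdryEdge d q)).comp (lm (bdryPlaq d q))
      = (0 : (Plaquette d →₀ ZMod q) →ₗ[ZMod q] (Vertex d →₀ ZMod q)) := by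
    apply Finsupp.lhom_ext
    intro p c
    simp only [LinearMap.comp_apply, lm_single, map_smul, LinearMap.zero_apply]
    obtain ⟨y, j1, j2⟩ := p
    have expand : lm (bdryEdge d q) (bdryPlaq d q (y, j1, j2)) = 0 := by
      rw [bdryPlaq]
      simp only [map_add, map_sub, lm_single_one]
      rw [bdryEdge, bdryEdge, bdryEdge, bdryEdge]
      simp only
      have hcomm : y + Pi.single j1 1 + Pi.single j2 1 = y + Pi.single j2 1 + Pi.single j1 1 :=
        add_right_comm _ _ _
      rw [hcomm]
      abel
    rw [expand, smul_zero]
  have h2 := DFunLike.congr_fun key τ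
  simpa only [LinearMap.comp_apply, LinearMap.zero_apply] using h2

/-! ### Flux through a horizontal slice -/

noncomputable def flux (i : Fin d) (t : ℤ) : (Vertex d →₀ ZMod q) →ₗ[ZMod q] ZMod q :=
  Finsupp.lsum (ZMod q) fun v => if t < v i then LinearMap.id else 0

lemma flux_single (i : Fin d) (t : ℤ) (v : Vertex d) (c : ZMod q) :
    flux i t (Finsupp.single v c) = if t < v i then c else 0 := by
  rw [flux, Finsupp.lsum_single]
  split_ifs <;> simp

lemma flux_bdryEdge (i : Fin d) (t : ℤ) (e : Edge d) :
    flux i t (bdryEdge d q e) = if e.2 = i ∧ e.1 i = t then (1 : ZMod q) else 0 := by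
  rw [bdryEdge, map_sub, flux_single, flux_single]
  by_cases hj : e.2 = i
  · have h1 : (e.1 + Pi.single e.2 1 : Vertex d) i = e.1 i + 1 := by
      rw [hj]
      exact apply_add_single_self i e.1
    rw [h1]
    by_cases ht : e.1 i = t
    · rw [if_pos (show t < e.1 i + 1 by omega), if_neg (show ¬ t < e.1 i by omega),
        if_pos (show e.2 = i ∧ e.1 i = t from ⟨hj, ht⟩)]
      simp
    · rw [if_neg (show ¬(e.2 = i ∧ e.1 i = t) by tauto)]
      rcases lt_or_ge t (e.1 i) with h | h
      · rw [if_pos (show t < e.1 i + 1 by omega), if_pos h]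
        simp
      · rw [if_neg (show ¬ t < e.1 i + 1 by omega), if_neg (show ¬ t < e.1 i by omega)]
        simp
  · have h1 : (e.1 + Pi.single e.2 1 : Vertex d) i = e.1 i := apply_add_single_ne hj e.1
    rw [h1, if_neg (show ¬(e.2 = i ∧ e.1 i = t) by tauto)]
    simp

lemma flux_cycle (i : Fin d) (t : ℤ) (γ : Edge d →₀ ZMod q)
    (hγ : lm (bdryEdge d q) γ = 0) :
    ∑ e ∈ γ.support.filter (fun e => e.2 = i ∧ e.1 i = t), γ e = 0 := by
  classical
  have h0 : flux i t (lm (bdryEdge d q) γ) = 0 := by rw [hγ]; simp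
  rw [lm_apply, map_finsuppSum] at h0
  simp only [map_smul, flux_bdryEdge, smul_eq_mul, mul_ite, mul_one, mul_zero] at h0
  rw [Finsupp.sum] at h0
  rw [Finset.sum_filter]
  exact h0

lemma card_slice_ne_one (i : Fin d) (t : ℤ) (γ : Edge d →₀ ZMod q)
    (hγ : lm (bdryEdge d q) γ = 0) :
    (γ.support.filter (fun e => e.2 = i ∧ e.1 i = t)).card ≠ 1 := by
  classical
  intro h1
  obtain ⟨e0, he0⟩ := Finset.card_eq_one.mp h1
  have hsum := flux_cycle i t γ hγ
  rw [he0, Finset.sum_singleton] at hsum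
  have hmem : e0 ∈ γ.support := by
    have h2 : e0 ∈ γ.support.filter (fun e => e.2 = i ∧ e.1 i = t) := by rw [he0]; simp
    exact (Finset.mem_filter.mp h2).1
  exact (Finsupp.mem_support_iff.mp hmem) hsum

/-! ### Splitting a cycle along an empty slice -/

lemma bdry1_filter (i : Fin d) (t : ℤ) (γ : Edge d →₀ ZMod q)
    (hNi : ∀ e ∈ γ.support, e.2 = i → e.1 i ≠ t) :
    lm (bdryEdge d q) (Finsupp.filter (fun e : Edge d => t < e.1 i) γ)
      = Finsupp.filter (fun v : Vertex d => t < v i) (lm (bdryEdge d q) γ) := by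
  classical
  set Q : Vertex d → Prop := fun v => t < v i with hQdef
  let FQ : (Vertex d →₀ ZMod q) →+ (Vertex d →₀ ZMod q) :=
    { toFun := Finsupp.filter Q
      map_zero' := Finsupp.filter_zero Q
      map_add' := fun u v => Finsupp.filter_add }
  have hFQ : ∀ u, FQ u = Finsupp.filter Q u := fun u => rfl
  have lhs_eq : lm (bdryEdge d q) (Finsupp.filter (fun e : Edge d => t < e.1 i) γ)
      = ∑ e ∈ γ.support.filter (fun e : Edge d => t < e.1 i), γ e • bdryEdge d q e := by
    rw [lm_apply, Finsupp.sum_filter_index, Finsupp.support_filter]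
  have rhs_eq : Finsupp.filter Q (lm (bdryEdge d q) γ)
      = ∑ e ∈ γ.support, (if t < e.1 i then γ e • bdryEdge d q e else 0) := by
    rw [lm_apply, ← hFQ, map_finsuppSum, Finsupp.sum]
    refine Finset.sum_congr rfl ?_
    intro e he
    rw [hFQ, Finsupp.filter_smul]
    by_cases hPe : t < e.1 i
    · rw [if_pos hPe]
      congr 1
      rw [bdryEdge, ← hFQ, map_sub, hFQ, hFQ]
      rw [Finsupp.filter_single_of_pos, Finsupp.filter_single_of_pos]
      · exact hPe
      · show t < (e.1 + Pi.single e.2 1 : Vertex d) i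
        by_cases hj : e.2 = i
        · rw [hj, apply_add_single_self i e.1]; omega
        · rw [apply_add_single_ne hj e.1]; exact hPe
    · rw [if_neg hPe]
      have hz : Finsupp.filter Q (bdryEdge d q e) = 0 := by
        rw [bdryEdge, ← hFQ, map_sub, hFQ, hFQ]
        rw [Finsupp.filter_single_of_neg, Finsupp.filter_single_of_neg, sub_zero]
        · exact hPe
        · show ¬ t < (e.1 + Pi.single e.2 1 : Vertex d) i
          by_cases hj : e.2 = i
          · rw [hj, apply_add_single_self i e.1]
            have := hNi e he hj
            omega
          · rw [apply_add_single_ne hj e.1]; exact hPe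
      rw [hz, smul_zero]
  rw [lhs_eq, rhs_eq, Finset.sum_filter]

/-! ### Median choice and double counting -/

lemma exists_median {α : Type*} [DecidableEq α] (E : Finset α) (h : α → ℤ) (hne : E.Nonempty) :
    ∃ m : ℤ, (∃ e ∈ E, h e = m) ∧
      (∀ t : ℤ, m ≤ t → 2 * (E.filter fun e => t < h e).card ≤ E.card) ∧
      (∀ t : ℤ, t < m → 2 * (E.filter fun e => h e ≤ t).card ≤ E.card) := by
  classical
  set A : ℤ → ℕ := fun t => (E.filter fun e => h e ≤ t).card with hA
  have hcard : 0 < E.card := Finset.card_pos.mpr hne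
  have hAmono : ∀ s t : ℤ, s ≤ t → A s ≤ A t := by
    intro s t hst
    exact Finset.card_le_card (Finset.monotone_filter_right E (fun e _ he => le_trans he hst))
  have hAcompl : ∀ t : ℤ, (E.filter fun e => t < h e).card + A t = E.card := by
    intro t
    have h1 : (E.filter fun e => ¬ t < h e) = E.filter fun e => h e ≤ t := by
      apply Finset.filter_congr
      intro e _
      simp [not_lt]
    have := Finset.card_filter_add_card_filter_not (s := E) (p := fun e => t < h e)
    rw [h1] at this
    exact this
  set P : ℤ → Prop := fun t => E.card ≤ 2 * A t with hP
  have hinh : ∃ z, P z := by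
    refine ⟨(E.image h).max' (Finset.Nonempty.image hne h), ?_⟩
    have hfull : E.filter (fun e => h e ≤ (E.image h).max' (Finset.Nonempty.image hne h)) = E := by
      apply Finset.filter_true_of_mem
      intro e he
      exact Finset.le_max' _ _ (Finset.mem_image_of_mem h he)
    have hAz : A ((E.image h).max' (Finset.Nonempty.image hne h)) = E.card := by
      show (E.filter (fun e => h e ≤ (E.image h).max' (Finset.Nonempty.image hne h))).card = E.card
      rw [hfull]
    show E.card ≤ 2 * A ((E.image h).max' (Finset.Nonempty.image hne h))
    omega
  have hbdd : ∃ b : ℤ, ∀ z, P z → b ≤ z := by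
    refine ⟨(E.image h).min' (Finset.Nonempty.image hne h), ?_⟩
    intro z hz
    by_contra hc
    push_neg at hc
    have hempty : E.filter (fun e => h e ≤ z) = ∅ := by
      apply Finset.filter_false_of_mem
      intro e he
      have := Finset.min'_le (E.image h) (h e) (Finset.mem_image_of_mem h he)
      omega
    have hAz : A z = 0 := by
      show (E.filter fun e => h e ≤ z).card = 0
      rw [hempty]
      rfl
    have hz' : E.card ≤ 2 * A z := hz
    omega
  obtain ⟨m, hm, hleast⟩ := Int.exists_least_of_bdd hbdd hinh
  have hm' : E.card ≤ 2 * A m := hm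
  have hout : ¬ P (m - 1) := by
    intro hc
    have := hleast (m - 1) hc
    omega
  have hAm1 : 2 * A (m - 1) < E.card := by
    rw [hP] at hout
    omega
  refine ⟨m, ?_, ?_, ?_⟩
  · by_contra hno
    push_neg at hno
    have : E.filter (fun e => h e ≤ m) = E.filter (fun e => h e ≤ m - 1) := by
      apply Finset.filter_congr
      intro e he
      have := hno e he
      constructor <;> intro <;> omega
    have : A m = A (m - 1) := by simp only [A]; rw [this]
    omega
  · intro t hmt
    have h1 := hAcompl t
    have h2 := hAmono m t hmt
    omega
  · intro t htm
    have h2 : (E.filter fun e => h e ≤ t).card ≤ A (m - 1) := hAmono t (m - 1) (by omega)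
    omega

lemma median_count {α : Type*} [DecidableEq α] (E : Finset α) (h : α → ℤ) (m : ℤ)
    (h1 : ∀ t : ℤ, m ≤ t → 2 * (E.filter fun e => t < h e).card ≤ E.card)
    (h2 : ∀ t : ℤ, t < m → 2 * (E.filter fun e => h e ≤ t).card ≤ E.card)
    (N : ℤ → ℕ) (S : ℕ)
    (hN1 : ∀ t : ℤ, m ≤ t → (∃ e ∈ E, t < h e) → 2 ≤ N t)
    (hN2 : ∀ t : ℤ, t < m → (∃ e ∈ E, h e ≤ t) → 2 ≤ N t)
    (hS : ∀ L : Finset ℤ, (∑ t ∈ L, N t) ≤ S) :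
    4 * (∑ e ∈ E, (h e - m).natAbs) ≤ E.card * S := by
  classical
  set I : α → Finset ℤ := fun e => Finset.Ico (min m (h e)) (max m (h e)) with hI
  have hIcard : ∀ e, (I e).card = (h e - m).natAbs := by
    intro e
    rcases le_total m (h e) with h' | h'
    · rw [hI]; simp only
      rw [min_eq_left h', max_eq_right h', Int.card_Ico]; omega
    · rw [hI]; simp only
      rw [min_eq_right h', max_eq_left h', Int.card_Ico]; omega
  set L : Finset ℤ := E.biUnion I with hL
  have hsub : ∀ e ∈ E, I e ⊆ L := fun e he => Finset.subset_biUnion_of_mem I he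
  have exchange : ∑ e ∈ E, (I e).card = ∑ t ∈ L, (E.filter fun e => t ∈ I e).card := by
    have step1 : ∀ e ∈ E, (I e).card = ∑ t ∈ L, (if t ∈ I e then 1 else 0) := by
      intro e he
      rw [← Finset.sum_filter]
      have : L.filter (fun t => t ∈ I e) = I e := by
        rw [Finset.filter_mem_eq_inter]
        exact Finset.inter_eq_right.mpr (hsub e he)
      rw [this]
      simp
    calc ∑ e ∈ E, (I e).card = ∑ e ∈ E, ∑ t ∈ L, (if t ∈ I e then 1 else 0) :=
          Finset.sum_congr rfl step1
      _ = ∑ t ∈ L, ∑ e ∈ E, (if t ∈ I e then 1 else 0) := Finset.sum_comm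
      _ = ∑ t ∈ L, (E.filter fun e => t ∈ I e).card := by
          refine Finset.sum_congr rfl fun t _ => ?_
          rw [← Finset.sum_filter]
          simp
  have key : ∀ t ∈ L, 4 * (E.filter fun e => t ∈ I e).card ≤ E.card * N t := by
    intro t ht
    obtain ⟨e0, he0, hte0⟩ := Finset.mem_biUnion.mp ht
    rw [hI] at hte0
    simp only [Finset.mem_Ico] at hte0
    rcases le_or_gt m t with hmt | htm
    · -- above the median
      have hsub2 : (E.filter fun e => t ∈ I e) ⊆ E.filter fun e => t < h e := by
        intro e he
        rw [Finset.mem_filter] at he ⊢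
        refine ⟨he.1, ?_⟩
        have := he.2
        rw [hI] at this
        simp only [Finset.mem_Ico] at this
        rcases le_total m (h e) with h' | h'
        · rw [max_eq_right h'] at this; omega
        · rw [min_eq_right h', max_eq_left h'] at this; omega
      have hC : 2 * (E.filter fun e => t ∈ I e).card ≤ E.card :=
        le_trans (by have := Finset.card_le_card hsub2; omega) (h1 t hmt)
      have hNt : 2 ≤ N t := by
        apply hN1 t hmt
        refine ⟨e0, he0, ?_⟩
        rcases le_total m (h e0) with h' | h'
        · rw [max_eq_right h'] at hte0; omega
        · rw [min_eq_right h', max_eq_left h'] at hte0; omega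
      calc 4 * (E.filter fun e => t ∈ I e).card
          = 2 * (2 * (E.filter fun e => t ∈ I e).card) := by ring
        _ ≤ 2 * E.card := by omega
        _ ≤ E.card * N t := by
            rw [mul_comm (E.card)]
            exact Nat.mul_le_mul_right _ hNt
    · -- below the median
      have hsub2 : (E.filter fun e => t ∈ I e) ⊆ E.filter fun e => h e ≤ t := by
        intro e he
        rw [Finset.mem_filter] at he ⊢
        refine ⟨he.1, ?_⟩
        have := he.2
        rw [hI] at this
        simp only [Finset.mem_Ico] at this
        rcases le_total m (h e) with h' | h'
        · rw [min_eq_left h'] at this; omega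
        · rw [min_eq_right h', max_eq_left h'] at this; omega
      have hC : 2 * (E.filter fun e => t ∈ I e).card ≤ E.card :=
        le_trans (by have := Finset.card_le_card hsub2; omega) (h2 t htm)
      have hNt : 2 ≤ N t := by
        apply hN2 t htm
        refine ⟨e0, he0, ?_⟩
        rcases le_total m (h e0) with h' | h'
        · rw [min_eq_left h'] at hte0; omega
        · rw [min_eq_right h', max_eq_left h'] at hte0; omega
      calc 4 * (E.filter fun e => t ∈ I e).card
          = 2 * (2 * (E.filter fun e => t ∈ I e).card) := by ring
        _ ≤ 2 * E.card := by omega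
        _ ≤ E.card * N t := by
            rw [mul_comm (E.card)]
            exact Nat.mul_le_mul_right _ hNt
  calc 4 * (∑ e ∈ E, (h e - m).natAbs)
      = 4 * (∑ e ∈ E, (I e).card) := by
        congr 1
        exact Finset.sum_congr rfl fun e _ => (hIcard e).symm
    _ = ∑ t ∈ L, 4 * (E.filter fun e => t ∈ I e).card := by
        rw [exchange, Finset.mul_sum]
    _ ≤ ∑ t ∈ L, E.card * N t := Finset.sum_le_sum key
    _ = E.card * ∑ t ∈ L, N t := by rw [Finset.mul_sum]
    _ ≤ E.card * S := Nat.mul_le_mul_left _ (hS L)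

/-! ### The numerical optimisation inequality -/

lemma numeric (j : ℕ) (s x T' : ℝ) (hs : 0 ≤ s) (hx : 0 ≤ x) (hT0 : 0 ≤ T') (hT : T' ≤ x)
    (hj0 : j = 0 → x = 0) :
    s * x / 4 + ((j : ℝ) - 1) / (8 * j) * T' ^ 2
      ≤ (j : ℝ) / (8 * ((j : ℝ) + 1)) * (s + x) ^ 2 := by
  rcases Nat.eq_zero_or_pos j with hj | hj
  · subst hj
    rw [hj0 rfl]
    norm_num
  · have hjR : (1 : ℝ) ≤ (j : ℝ) := by exact_mod_cast hj
    have hc' : (0 : ℝ) ≤ ((j : ℝ) - 1) / (8 * j) := by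
      apply div_nonneg <;> nlinarith
    have step1 : ((j : ℝ) - 1) / (8 * j) * T' ^ 2 ≤ ((j : ℝ) - 1) / (8 * j) * x ^ 2 := by
      apply mul_le_mul_of_nonneg_left _ hc'
      nlinarith
    have expand : (j : ℝ) / (8 * ((j : ℝ) + 1)) * (s + x) ^ 2
        - (s * x / 4 + ((j : ℝ) - 1) / (8 * j) * x ^ 2)
        = ((j : ℝ) * s - x) ^ 2 / (8 * j * ((j : ℝ) + 1)) := by
      have hj1 : (j : ℝ) ≠ 0 := by positivity
      have hj2 : (j : ℝ) + 1 ≠ 0 := by positivity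
      field_simp
      ring
    have hpos : (0 : ℝ) ≤ ((j : ℝ) * s - x) ^ 2 / (8 * j * ((j : ℝ) + 1)) := by positivity
    linarith

/-! ### Main induction -/

set_option maxHeartbeats 1600000 in
lemma main (d q : ℕ) : ∀ (n : ℕ) (D : Finset (Fin d)) (γ : Edge d →₀ ZMod q),
    D.card + γ.support.card ≤ n →
    bdry1 d q γ = 0 → (∀ e ∈ γ.support, e.2 ∈ D) →
    ∃ τ : Plaquette d →₀ ZMod q, bdry2 d q τ = γ ∧
      (τ.support.card : ℝ) ≤ ((D.card : ℝ) - 1) / (8 * D.card) * (γ.support.card : ℝ) ^ 2 := by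
  intro n
  induction n with
  | zero =>
      intro D γ hn hγ hD
      have hγ0 : γ = 0 := by
        have h1 : γ.support.card = 0 := by omega
        exact Finsupp.support_eq_empty.mp (Finset.card_eq_zero.mp h1)
      subst hγ0
      exact ⟨0, by simp [bdry2], by simp⟩
  | succ n ih =>
      intro D γ hn hγ hD
      classical
      by_cases hγ0 : γ = 0
      · subst hγ0
        exact ⟨0, by simp [bdry2], by simp⟩
      have hsuppne : γ.support.Nonempty := Finsupp.support_nonempty_iff.mpr hγ0
      obtain ⟨e₀, he₀⟩ := hsuppne
      set i : Fin d := e₀.2 with hi_def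
      have hiD : i ∈ D := hD e₀ he₀
      have hDpos : 1 ≤ D.card := Finset.card_pos.mpr ⟨i, hiD⟩
      have hcycle : lm (bdryEdge d q) γ = 0 := by rw [← bdry1_eq]; exact hγ
      have hcD0 : (0:ℝ) ≤ ((D.card : ℝ) - 1) / (8 * D.card) := by
        apply div_nonneg
        · have h1 : (1:ℝ) ≤ (D.card : ℝ) := by exact_mod_cast hDpos
          linarith
        · positivity
      by_cases hsplit : ∃ t : ℤ, (∀ e ∈ γ.support, e.2 = i → e.1 i ≠ t) ∧
          (∃ e ∈ γ.support, t < e.1 i) ∧ (∃ e ∈ γ.support, e.1 i ≤ t)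
      · -- Split case: the cycle decomposes along an empty slice
        obtain ⟨t, hNt, ⟨ea, hea, hta⟩, ⟨eb, heb, htb⟩⟩ := hsplit
        set γa := Finsupp.filter (fun e : Edge d => t < e.1 i) γ with hγa
        set γb := Finsupp.filter (fun e : Edge d => ¬ t < e.1 i) γ with hγb
        have hab : γa + γb = γ := Finsupp.filter_pos_add_filter_neg γ _
        have hcycA : lm (bdryEdge d q) γa = 0 := by
          rw [hγa, bdry1_filter i t γ hNt, hcycle, Finsupp.filter_zero]
        have hcycB : lm (bdryEdge d q) γb = 0 := by
          have h2 := congrArg (lm (bdryEdge d q)) hab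
          rw [map_add, hcycA, zero_add, hcycle] at h2
          exact h2
        have hsuppA : γa.support = γ.support.filter (fun e => t < e.1 i) :=
          Finsupp.support_filter _ _
        have hsuppB : γb.support = γ.support.filter (fun e => ¬ t < e.1 i) :=
          Finsupp.support_filter _ _
        have hcards : γa.support.card + γb.support.card = γ.support.card := by
          rw [hsuppA, hsuppB]
          exact Finset.card_filter_add_card_filter_not _
        have hA1 : 1 ≤ γa.support.card := by
          rw [hsuppA]
          exact Finset.card_pos.mpr ⟨ea, Finset.mem_filter.mpr ⟨hea, hta⟩⟩
        have hB1 : 1 ≤ γb.support.card := by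
          rw [hsuppB]
          exact Finset.card_pos.mpr ⟨eb, Finset.mem_filter.mpr ⟨heb, not_lt.mpr htb⟩⟩
        have hDA : ∀ e ∈ γa.support, e.2 ∈ D := by
          intro e he
          rw [hsuppA] at he
          exact hD e (Finset.mem_filter.mp he).1
        have hDB : ∀ e ∈ γb.support, e.2 ∈ D := by
          intro e he
          rw [hsuppB] at he
          exact hD e (Finset.mem_filter.mp he).1
        obtain ⟨τa, hτa1, hτa2⟩ := ih D γa (by omega) (by rw [bdry1_eq]; exact hcycA) hDA
        obtain ⟨τb, hτb1, hτb2⟩ := ih D γb (by omega) (by rw [bdry1_eq]; exact hcycB) hDB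
        refine ⟨τa + τb, ?_, ?_⟩
        · rw [bdry2_eq, map_add, ← bdry2_eq, ← bdry2_eq, hτa1, hτb1, hab]
        · have hcard : ((τa + τb).support.card : ℝ)
              ≤ (τa.support.card : ℝ) + (τb.support.card : ℝ) := by
            have h1 : (τa + τb).support.card ≤ τa.support.card + τb.support.card :=
              le_trans (Finset.card_le_card Finsupp.support_add) (Finset.card_union_le _ _)
            exact_mod_cast h1
          have hTsum : (γa.support.card : ℝ) + (γb.support.card : ℝ)
              = (γ.support.card : ℝ) := by exact_mod_cast hcards
          have hTa : (0:ℝ) ≤ (γa.support.card : ℝ) := by positivity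
          have hTb : (0:ℝ) ≤ (γb.support.card : ℝ) := by positivity
          calc ((τa + τb).support.card : ℝ)
              ≤ (τa.support.card : ℝ) + (τb.support.card : ℝ) := hcard
            _ ≤ ((D.card : ℝ) - 1) / (8 * D.card) * (γa.support.card : ℝ) ^ 2
                + ((D.card : ℝ) - 1) / (8 * D.card) * (γb.support.card : ℝ) ^ 2 :=
                add_le_add hτa2 hτb2
            _ = ((D.card : ℝ) - 1) / (8 * D.card)
                * ((γa.support.card : ℝ) ^ 2 + (γb.support.card : ℝ) ^ 2) := by ring
            _ ≤ ((D.card : ℝ) - 1) / (8 * D.card)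
                * ((γa.support.card : ℝ) + (γb.support.card : ℝ)) ^ 2 := by
                apply mul_le_mul_of_nonneg_left _ hcD0
                nlinarith [mul_nonneg hTa hTb]
            _ = ((D.card : ℝ) - 1) / (8 * D.card) * (γ.support.card : ℝ) ^ 2 := by
                rw [hTsum]
      · -- Projection case
        have hkey : ∀ t : ℤ, (∃ e ∈ γ.support, t < e.1 i) → (∃ e ∈ γ.support, e.1 i ≤ t) →
            2 ≤ (γ.support.filter fun e => e.2 = i ∧ e.1 i = t).card := by
          intro t ha hb
          have hne1 : (γ.support.filter fun e => e.2 = i ∧ e.1 i = t).card ≠ 1 :=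
            card_slice_ne_one i t γ hcycle
          have hne0 : (γ.support.filter fun e => e.2 = i ∧ e.1 i = t).card ≠ 0 := by
            intro h0
            apply hsplit
            refine ⟨t, ?_, ha, hb⟩
            intro e he hei hti
            have h2 : e ∈ γ.support.filter fun e => e.2 = i ∧ e.1 i = t :=
              Finset.mem_filter.mpr ⟨he, hei, hti⟩
            rw [Finset.card_eq_zero] at h0
            rw [h0] at h2
            exact absurd h2 (Finset.notMem_empty e)
          omega
        set Eperp := γ.support.filter (fun e => ¬ e.2 = i) with hEperp
        set Ei := γ.support.filter (fun e => e.2 = i) with hEi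
        have hcards : Ei.card + Eperp.card = γ.support.card :=
          Finset.card_filter_add_card_filter_not _
        have hmex : ∃ m : ℤ, 4 * (∑ e ∈ Eperp, (e.1 i - m).natAbs) ≤ Eperp.card * Ei.card := by
          rcases Eperp.eq_empty_or_nonempty with hE | hE
          · exact ⟨0, by rw [hE]; simp⟩
          · obtain ⟨m, ⟨e₁, he₁, hme₁⟩, hmed1, hmed2⟩ := exists_median Eperp (fun e => e.1 i) hE
            have he₁s : e₁ ∈ γ.support := (Finset.mem_filter.mp he₁).1
            refine ⟨m, median_count Eperp (fun e => e.1 i) m hmed1 hmed2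
              (fun t => (γ.support.filter fun e => e.2 = i ∧ e.1 i = t).card) Ei.card
              ?_ ?_ ?_⟩
            · rintro t hmt ⟨e2, he2, ht2⟩
              exact hkey t ⟨e2, (Finset.mem_filter.mp he2).1, ht2⟩ ⟨e₁, he₁s, by omega⟩
            · rintro t htm ⟨e2, he2, ht2⟩
              exact hkey t ⟨e₁, he₁s, by omega⟩ ⟨e2, (Finset.mem_filter.mp he2).1, ht2⟩
            · intro L
              have h5 : (Ei.filter fun e => e.1 i ∈ L).card
                  = ∑ t ∈ L, ((Ei.filter fun e => e.1 i ∈ L).filter fun e => e.1 i = t).card :=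
                Finset.card_eq_sum_card_fiberwise (fun e he => (Finset.mem_filter.mp he).2)
              have heq : ∑ t ∈ L, (γ.support.filter fun e => e.2 = i ∧ e.1 i = t).card
                  = (Ei.filter fun e => e.1 i ∈ L).card := by
                rw [h5]
                refine Finset.sum_congr rfl fun t ht => ?_
                congr 1
                ext e
                simp only [Finset.mem_filter, hEi]
                constructor
                · rintro ⟨hs, hei, hti⟩
                  exact ⟨⟨⟨hs, hei⟩, by rw [hti]; exact ht⟩, hti⟩
                · rintro ⟨⟨⟨hs, hei⟩, hl⟩, hti⟩
                  exact ⟨hs, hei, hti⟩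
              rw [heq]
              exact Finset.card_le_card (Finset.filter_subset _ _)
        obtain ⟨m, hcount⟩ := hmex
        have hhom := homotopy i m γ
        rw [hcycle, map_zero, add_zero] at hhom
        set Hγ := lm (Hedge (q := q) i m) γ with hHγ
        set γ' := lm (fEdge (q := q) i m) γ with hγ'def
        have hcyc' : lm (bdryEdge d q) γ' = 0 := by
          have h2 := congrArg (lm (bdryEdge d q)) hhom
          rw [map_add, bdry1_bdry2_eq_zero, zero_add, hcycle] at h2
          exact h2
        have hsupp' : γ'.support ⊆ Eperp.image (fun e => ((setI i e.1 m, e.2) : Edge d)) := by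
          intro e' he'
          rw [hγ'def, lm_apply] at he'
          have h1 : e' ∈ γ.support.biUnion (fun e => ((γ e) • fEdge (q := q) i m e).support) :=
            Finsupp.support_sum he'
          obtain ⟨e, he, he2⟩ := Finset.mem_biUnion.mp h1
          have he3 : e' ∈ (fEdge (q := q) i m e).support := Finsupp.support_smul he2
          by_cases hei : e.2 = i
          · rw [fEdge, if_pos hei] at he3
            simp at he3
          · rw [fEdge, if_neg hei] at he3
            have he4 : e' ∈ ({((setI i e.1 m, e.2) : Edge d)} : Finset (Edge d)) :=
              Finsupp.support_single_subset he3
            rw [Finset.mem_singleton] at he4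
            exact Finset.mem_image.mpr ⟨e, Finset.mem_filter.mpr ⟨he, hei⟩, he4.symm⟩
        have hcard' : γ'.support.card ≤ Eperp.card :=
          le_trans (Finset.card_le_card hsupp') Finset.card_image_le
        have hdir' : ∀ e' ∈ γ'.support, e'.2 ∈ D.erase i := by
          intro e' he'
          obtain ⟨e, he, heq⟩ := Finset.mem_image.mp (hsupp' he')
          have hei : ¬ e.2 = i := (Finset.mem_filter.mp he).2
          have heD : e.2 ∈ D := hD e (Finset.mem_filter.mp he).1
          rw [← heq]
          exact Finset.mem_erase.mpr ⟨hei, heD⟩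
        have hjcard : (D.erase i).card = D.card - 1 := Finset.card_erase_of_mem hiD
        have hEperpT : Eperp.card ≤ γ.support.card := by omega
        obtain ⟨τ', hτ'1, hτ'2⟩ := ih (D.erase i) γ'
          (by rw [hjcard]; omega)
          (by rw [bdry1_eq]; exact hcyc') hdir'
        have hHcard : Hγ.support.card ≤ ∑ e ∈ Eperp, (e.1 i - m).natAbs := by
          calc Hγ.support.card
              ≤ ∑ e ∈ γ.support, (Hedge (q := q) i m e).support.card :=
                card_support_lm_le _ _
            _ = ∑ e ∈ Ei, (Hedge (q := q) i m e).support.card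
                + ∑ e ∈ Eperp, (Hedge (q := q) i m e).support.card := by
                rw [hEi, hEperp, Finset.sum_filter_add_sum_filter_not]
            _ ≤ 0 + ∑ e ∈ Eperp, (e.1 i - m).natAbs := by
                apply add_le_add
                · apply le_of_eq
                  apply Finset.sum_eq_zero
                  intro e he
                  have hei : e.2 = i := (Finset.mem_filter.mp he).2
                  rw [Hedge, if_pos hei]
                  simp
                · apply Finset.sum_le_sum
                  intro e he
                  have hei : ¬ e.2 = i := (Finset.mem_filter.mp he).2
                  rw [Hedge, if_neg hei]
                  exact card_support_pcol i e.2 e.1 m (e.1 i)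
            _ = ∑ e ∈ Eperp, (e.1 i - m).natAbs := zero_add _
        refine ⟨Hγ + τ', ?_, ?_⟩
        · have hhom2 : bdry2 d q Hγ + γ' = γ := by rw [bdry2_eq]; exact hhom
          rw [bdry2_eq, map_add, ← bdry2_eq, ← bdry2_eq, hτ'1]
          exact hhom2
        · -- the numerical bound
          set j := (D.erase i).card with hj
          have hj1 : D.card = j + 1 := by omega
          have hx0 : j = 0 → Eperp.card = 0 := by
            intro h0
            rw [Finset.card_eq_zero] at h0 ⊢
            rw [Finset.eq_empty_iff_forall_notMem]
            intro e he
            have hei : ¬ e.2 = i := (Finset.mem_filter.mp he).2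
            have heD : e.2 ∈ D := hD e (Finset.mem_filter.mp he).1
            have : e.2 ∈ D.erase i := Finset.mem_erase.mpr ⟨hei, heD⟩
            rw [h0] at this
            exact absurd this (Finset.notMem_empty _)
          have h1 : ((Hγ + τ').support.card : ℝ)
              ≤ (Hγ.support.card : ℝ) + (τ'.support.card : ℝ) := by
            have h2 : (Hγ + τ').support.card ≤ Hγ.support.card + τ'.support.card :=
              le_trans (Finset.card_le_card Finsupp.support_add) (Finset.card_union_le _ _)
            exact_mod_cast h2
          have h2 : (Hγ.support.card : ℝ) ≤ (Eperp.card : ℝ) * (Ei.card : ℝ) / 4 := by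
            have h3 : 4 * Hγ.support.card ≤ Eperp.card * Ei.card :=
              le_trans (Nat.mul_le_mul_left 4 hHcard) hcount
            have h4 : (4:ℝ) * (Hγ.support.card : ℝ) ≤ (Eperp.card : ℝ) * (Ei.card : ℝ) := by
              exact_mod_cast h3
            linarith
          have h4 := numeric j ((Ei.card : ℝ)) ((Eperp.card : ℝ)) ((γ'.support.card : ℝ))
            (Nat.cast_nonneg _) (Nat.cast_nonneg _) (Nat.cast_nonneg _)
            (by exact_mod_cast hcard')
            (by intro h0; exact_mod_cast hx0 h0)
          have hTeq : (Ei.card : ℝ) + (Eperp.card : ℝ) = (γ.support.card : ℝ) := by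
            exact_mod_cast hcards
          have hcdeq : ((D.card : ℝ) - 1) / (8 * D.card) = (j : ℝ) / (8 * ((j : ℝ) + 1)) := by
            rw [hj1]
            push_cast
            ring_nf
          calc ((Hγ + τ').support.card : ℝ)
              ≤ (Hγ.support.card : ℝ) + (τ'.support.card : ℝ) := h1
            _ ≤ (Eperp.card : ℝ) * (Ei.card : ℝ) / 4
                + ((j : ℝ) - 1) / (8 * j) * (γ'.support.card : ℝ) ^ 2 := by
                apply add_le_add h2
                exact hτ'2
            _ ≤ (j : ℝ) / (8 * ((j : ℝ) + 1)) * ((Ei.card : ℝ) + (Eperp.card : ℝ)) ^ 2 := by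
                have := h4
                linarith [h4]
            _ = ((D.card : ℝ) - 1) / (8 * D.card) * (γ.support.card : ℝ) ^ 2 := by
                rw [hTeq, hcdeq]


end Geometry
/-- Discrete isoperimetric inequality: a 1-cycle in `ℤ^d` with `ZMod q`
coefficients supported on `T` edges bounds a 2-chain supported on at most
`((d-1)/(8d))·T²` plaquettes. -/
theorem stmt10 (d q : ℕ) (hq : Nat.Prime q)
    (γ : Edge d →₀ ZMod q) (hγ : bdry1 d q γ = 0) :
    ∃ τ : Plaquette d →₀ ZMod q, bdry2 d q τ = γ ∧
      (τ.support.card : ℝ) ≤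
        (((d : ℝ) - 1) / (8 * (d : ℝ))) * ((γ.support.card : ℝ)) ^ 2 := by
  obtain ⟨τ, h1, h2⟩ := main d q ((Finset.univ : Finset (Fin d)).card + γ.support.card)
    Finset.univ γ le_rfl hγ (fun e _ => Finset.mem_univ _)
  refine ⟨τ, h1, ?_⟩
  have hcard : ((Finset.univ : Finset (Fin d)).card : ℝ) = (d : ℝ) := by
    rw [Finset.card_univ, Fintype.card_fin]
  rw [hcard] at h2
  exact h2

end Stmt10
end

section
/- Let β > 0, p = 1 − e^{−β}, and let γ be a set of n edges. In independent Bernoulli percolation where each of the 2(d−1) plaquettes adjacent to a given edge is open with probability p₂ and the edge itself is open with probability p₁, all independently, the probability that every edge of γ is either open or adjacent to an open plaquette, restricted to a subfamily of m = ⌈n/(2(i+1))⌉ edges no two of which share an adjacent plaquette, is at most (1 − (1−p₂)^{2(d−i)}(1−p₁))^m, which equals e^{−c|γ|} for c = −log(1 − (1−p₂)^{2(d−i)}(1−p₁))/(2(i+1)) > 0. -/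
open scoped Classical

/-- Independent percolation upper bound for the perimeter law: with `m`
disjoint groups, each consisting of one edge (open with probability `p₁`) and
`2(d-i)` plaquettes (each open with probability `p₂`), all independent, the
probability that every edge is open or adjacent to an open plaquette is at
most `(1 - (1-p₂)^{2(d-i)}(1-p₁))^m ≤ e^{-c n}`, where
`c = -log(1 - (1-p₂)^{2(d-i)}(1-p₁))/(2(i+1)) > 0` and `m = ⌈n/(2(i+1))⌉`;
moreover with real exponent `n/(2(i+1))` the bound equals `e^{-cn}` exactly. -/
theorem stmt18 (d i n m : ℕ) (hdi : i < d) (hn : 1 ≤ n)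
    (β : ℝ) (hβ : 0 < β) (p : ℝ) (hpdef : p = 1 - Real.exp (-β))
    (p₁ p₂ : ℝ) (hp₁ : p₁ ∈ Set.Ioo (0:ℝ) 1) (hp₂ : p₂ ∈ Set.Ioo (0:ℝ) 1)
    (hm : m = ⌈(n : ℝ) / (2 * ((i : ℝ) + 1))⌉₊)
    (c : ℝ)
    (hc : c = - Real.log (1 - (1 - p₂) ^ (2 * (d - i)) * (1 - p₁))
      / (2 * ((i : ℝ) + 1))) :
    0 < c ∧
    (∑ ω : Fin m → Bool × (Fin (2 * (d - i)) → Bool),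
        (if (∀ j, (ω j).1 = true ∨ ∃ k, (ω j).2 k = true) then
          ∏ j, ((if (ω j).1 then p₁ else 1 - p₁)
            * ∏ k, (if (ω j).2 k then p₂ else 1 - p₂))
        else 0))
      ≤ (1 - (1 - p₂) ^ (2 * (d - i)) * (1 - p₁)) ^ m ∧
    (1 - (1 - p₂) ^ (2 * (d - i)) * (1 - p₁)) ^ m ≤ Real.exp (-c * n) ∧
    (1 - (1 - p₂) ^ (2 * (d - i)) * (1 - p₁))
        ^ ((n : ℝ) / (2 * ((i : ℝ) + 1)))
      = Real.exp (-c * n) := by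
  obtain ⟨hp₁0, hp₁1⟩ := hp₁
  obtain ⟨hp₂0, hp₂1⟩ := hp₂
  set K := 2 * (d - i) with hK
  set q : ℝ := (1 - p₂) ^ K * (1 - p₁) with hq
  set r : ℝ := 1 - q with hr
  have h2i : (0:ℝ) < 2 * ((i : ℝ) + 1) := by positivity
  have hq0 : 0 < q := by
    apply mul_pos (pow_pos (by linarith) _) (by linarith)
  have hq1 : q < 1 := by
    have h1 : (1 - p₂) ^ K ≤ 1 := pow_le_one₀ (by linarith) (by linarith)
    calc q ≤ 1 * (1 - p₁) := mul_le_mul_of_nonneg_right h1 (by linarith)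
    _ = 1 - p₁ := one_mul _
    _ < 1 := by linarith
  have hr0 : 0 < r := by simp [hr]; linarith
  have hr1 : r < 1 := by simp [hr]; linarith
  have hlog : Real.log r < 0 := Real.log_neg hr0 hr1
  have hcpos : 0 < c := by
    rw [hc]
    apply div_pos (by linarith) h2i
  -- exact rpow form
  have hrpow : r ^ ((n : ℝ) / (2 * ((i : ℝ) + 1))) = Real.exp (-c * n) := by
    rw [Real.rpow_def_of_pos hr0, hc]
    ring_nf
  refine ⟨hcpos, ?_, ?_, hrpow⟩
  · -- sum equals r^m
    have hsum : (∑ ω : Fin m → Bool × (Fin K → Bool),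
        (if (∀ j, (ω j).1 = true ∨ ∃ k, (ω j).2 k = true) then
          ∏ j, ((if (ω j).1 then p₁ else 1 - p₁)
            * ∏ k, (if (ω j).2 k then p₂ else 1 - p₂))
        else 0)) = r ^ m := by
      have h1 : ∀ ω : Fin m → Bool × (Fin K → Bool),
          (if (∀ j, (ω j).1 = true ∨ ∃ k, (ω j).2 k = true) then
            ∏ j, ((if (ω j).1 then p₁ else 1 - p₁)
              * ∏ k, (if (ω j).2 k then p₂ else 1 - p₂))
          else 0)
          = ∏ j, (if ((ω j).1 = true ∨ ∃ k, (ω j).2 k = true) then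
              ((if (ω j).1 then p₁ else 1 - p₁)
                * ∏ k, (if (ω j).2 k then p₂ else 1 - p₂)) else 0) := by
        intro ω
        by_cases h : ∀ j, (ω j).1 = true ∨ ∃ k, (ω j).2 k = true
        · rw [if_pos h]
          exact Finset.prod_congr rfl fun j _ => (if_pos (h j)).symm
        · rw [if_neg h]
          obtain ⟨j, hj⟩ := not_forall.mp h
          symm
          apply Finset.prod_eq_zero (Finset.mem_univ j)
          exact if_neg hj
      simp only [h1]
      rw [← Fintype.prod_sum
        (fun (_ : Fin m) (x : Bool × (Fin K → Bool)) =>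
          if (x.1 = true ∨ ∃ k, x.2 k = true) then
            ((if x.1 then p₁ else 1 - p₁) * ∏ k, (if x.2 k then p₂ else 1 - p₂))
          else 0)]
      have hone : (∑ x : Bool × (Fin K → Bool),
          (if (x.1 = true ∨ ∃ k, x.2 k = true) then
            ((if x.1 then p₁ else 1 - p₁) * ∏ k, (if x.2 k then p₂ else 1 - p₂))
          else 0)) = r := by
        have htot : (∑ x : Bool × (Fin K → Bool),
            ((if x.1 then p₁ else 1 - p₁) * ∏ k, (if x.2 k then p₂ else 1 - p₂))) = 1 := by
          rw [Fintype.sum_prod_type]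
          have hg : (∑ g : Fin K → Bool, ∏ k, (if g k then p₂ else 1 - p₂)) = 1 := by
            rw [← Fintype.prod_sum (fun (_ : Fin K) (b : Bool) => if b then p₂ else 1 - p₂)]
            simp
          have hb : ∀ b : Bool, (∑ g : Fin K → Bool,
              (if b then p₁ else 1 - p₁) * ∏ k, (if g k then p₂ else 1 - p₂))
              = (if b then p₁ else 1 - p₁) := by
            intro b
            rw [← Finset.mul_sum, hg, mul_one]
          simp only [hb]
          simp
        have hcompl : (∑ x : Bool × (Fin K → Bool),
            (if ¬(x.1 = true ∨ ∃ k, x.2 k = true) then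
              ((if x.1 then p₁ else 1 - p₁) * ∏ k, (if x.2 k then p₂ else 1 - p₂))
            else 0)) = q := by
          have hiff : ∀ x : Bool × (Fin K → Bool),
              (¬(x.1 = true ∨ ∃ k, x.2 k = true)) ↔ x = (false, fun _ => false) := by
            intro x
            constructor
            · intro h
              push_neg at h
              obtain ⟨h1, h2⟩ := h
              ext
              · simp [Bool.eq_false_iff.mpr (by simp [h1] : x.1 ≠ true) ]
              · next k => simpa using h2 k
            · rintro rfl
              simp
          simp only [hiff]
          rw [Finset.sum_ite_eq' Finset.univ ((false, fun _ => false) : Bool × (Fin K → Bool))]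
          simp [hq, mul_comm]
        have : ∀ x : Bool × (Fin K → Bool),
            ((if x.1 then p₁ else 1 - p₁) * ∏ k, (if x.2 k then p₂ else 1 - p₂))
            = (if (x.1 = true ∨ ∃ k, x.2 k = true) then
              ((if x.1 then p₁ else 1 - p₁) * ∏ k, (if x.2 k then p₂ else 1 - p₂)) else 0)
            + (if ¬(x.1 = true ∨ ∃ k, x.2 k = true) then
              ((if x.1 then p₁ else 1 - p₁) * ∏ k, (if x.2 k then p₂ else 1 - p₂)) else 0) := by
          intro x
          by_cases h : (x.1 = true ∨ ∃ k, x.2 k = true) <;> simp [h]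
        rw [Finset.sum_congr rfl (fun x _ => this x), Finset.sum_add_distrib, hcompl] at htot
        linarith
      rw [hone, Finset.prod_const, Finset.card_univ, Fintype.card_fin]
    exact le_of_eq hsum
  · -- r^m ≤ exp(-c n)
    rw [← hrpow, ← Real.rpow_natCast r m]
    apply Real.rpow_le_rpow_of_exponent_ge hr0 (le_of_lt hr1)
    rw [hm]
    exact Nat.le_ceil _
end
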